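/- Let ℛ₄ be the 3×3 orthogonal matrix that is block diagonal with the 2×2 block R_{π/2} (counterclockwise rotation by π/2) followed by the 1×1 entry −1. Then the quotient of the unit sphere S² ⊆ ℝ³ by the equivalence relation X ≈ Y iff Y = ±ℛ₄^l X for some l ∈ ℤ, with the quotient topology, is homeomorphic to the closed unit disc 𝔻² = {z ∈ ℂ : |z| ≤ 1}. (This quotient is the space 𝓛(4) of shapes of 4-segments without labelled vertices.) -/

import Mathlib

noncomputable section

/-- `ℛ₄`: block diagonal with the rotation block `R_{π/2}` and the `1 × 1` entry `−1`. -/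
def R4 : Matrix (Fin 3) (Fin 3) ℝ :=
  Matrix.of
    ![![Real.cos (Real.pi / 2), -Real.sin (Real.pi / 2), 0],
      ![Real.sin (Real.pi / 2), Real.cos (Real.pi / 2), 0],
      ![0, 0, -1]]

/-- The relation `X ≈ Y` on the unit sphere `S² ⊆ ℝ³`: `Y = ±ℛ₄^l X` for some `l ∈ ℤ`. -/
def apxRel4 (X Y : {v : Fin 3 → ℝ // ∑ i, (v i) ^ 2 = 1}) : Prop :=
  ∃ (l : ℤ) (ε : ℝ), (ε = 1 ∨ ε = -1) ∧
    (Y : Fin 3 → ℝ) = ε • ((R4 ^ l).mulVec X)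

lemma R4_eq : R4 = Matrix.of ![![0,-1,0],![1,0,0],![0,0,-1]] := by
  simp [R4]

lemma R4_pow_four : R4 ^ 4 = 1 := by
  rw [R4_eq]
  ext i j
  fin_cases i <;> fin_cases j <;>
    simp [pow_succ, Matrix.mul_apply, Fin.sum_univ_three, Matrix.one_apply,
      Matrix.vecHead, Matrix.vecTail]

lemma R4_mulVec (v : Fin 3 → ℝ) :
    R4.mulVec v = ![-(v 1), v 0, -(v 2)] := by
  funext i
  fin_cases i <;> simp [R4_eq, Matrix.mulVec, dotProduct, Fin.sum_univ_three]

/-- the key invariant map -/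
def phi (v : Fin 3 → ℝ) : ℂ := ((v 0 : ℂ) + (v 1 : ℂ) * Complex.I) ^ 4

lemma phi_R4_mulVec (v : Fin 3 → ℝ) : phi (R4.mulVec v) = phi v := by
  rw [R4_mulVec]
  simp only [phi]
  have : ((-(v 1) : ℝ) : ℂ) + ((v 0 : ℝ) : ℂ) * Complex.I
      = Complex.I * (((v 0 : ℝ) : ℂ) + (v 1 : ℝ) * Complex.I) := by
    push_cast
    linear_combination (-(v 1 : ℂ)) * Complex.I_sq
  simp only [Matrix.cons_val_zero, Matrix.cons_val_one, Matrix.head_cons]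
  rw [this, mul_pow, Complex.I_pow_four, one_mul]

lemma phi_pow_mulVec (k : ℕ) (v : Fin 3 → ℝ) : phi ((R4 ^ k).mulVec v) = phi v := by
  induction k generalizing v with
  | zero => simp
  | succ n ih =>
    rw [pow_succ', ← Matrix.mulVec_mulVec, phi_R4_mulVec, ih]

lemma R4_zpow (l : ℤ) : ∃ k : ℕ, R4 ^ l = R4 ^ k := by
  rcases l with n | n
  · exact ⟨n, by rw [Int.ofNat_eq_coe, zpow_natCast]⟩
  · refine ⟨3 * (n + 1), ?_⟩
    have h1 : (Int.negSucc n) = -((n+1 : ℕ) : ℤ) := by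
      simp [Int.negSucc_eq]
    rw [h1, Matrix.zpow_neg_natCast]
    refine Matrix.inv_eq_right_inv ?_
    rw [← pow_add]
    have : (n + 1) + 3 * (n + 1) = 4 * (n + 1) := by ring
    rw [this, pow_mul, R4_pow_four, one_pow]

lemma phi_smul (ε : ℝ) (hε : ε = 1 ∨ ε = -1) (v : Fin 3 → ℝ) : phi (ε • v) = phi v := by
  have h4 : (ε : ℂ) ^ 4 = 1 := by rcases hε with h | h <;> norm_num [h]
  simp only [phi, Pi.smul_apply, smul_eq_mul]
  push_cast
  calc ((ε : ℂ) * v 0 + (ε : ℂ) * v 1 * Complex.I) ^ 4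
      = (ε : ℂ)^4 * ((v 0 : ℂ) + (v 1 : ℂ) * Complex.I) ^ 4 := by ring
    _ = _ := by rw [h4, one_mul]

lemma phi_invariant {x y : Fin 3 → ℝ}
    (h : ∃ (l : ℤ) (ε : ℝ), (ε = 1 ∨ ε = -1) ∧ y = ε • ((R4 ^ l).mulVec x)) :
    phi y = phi x := by
  obtain ⟨l, ε, hε, rfl⟩ := h
  obtain ⟨k, hk⟩ := R4_zpow l
  rw [phi_smul ε hε, hk, phi_pow_mulVec]

/-- explicit small powers acting on vectors -/
lemma R4_zpow0_mulVec (v : Fin 3 → ℝ) : (R4 ^ (0:ℤ)).mulVec v = v := by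
  rw [zpow_zero]; simp

lemma R4_zpow1_mulVec (v : Fin 3 → ℝ) :
    (R4 ^ (1:ℤ)).mulVec v = ![-(v 1), v 0, -(v 2)] := by
  rw [zpow_one, R4_mulVec]

lemma R4_zpow2_mulVec (v : Fin 3 → ℝ) :
    (R4 ^ (2:ℤ)).mulVec v = ![-(v 0), -(v 1), v 2] := by
  have : (2:ℤ) = ((2:ℕ):ℤ) := by norm_num
  rw [this, zpow_natCast, pow_two, ← Matrix.mulVec_mulVec, R4_mulVec, R4_mulVec]
  funext i; fin_cases i <;> simp

lemma R4_zpow3_mulVec (v : Fin 3 → ℝ) :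
    (R4 ^ (3:ℤ)).mulVec v = ![v 1, -(v 0), -(v 2)] := by
  have : (3:ℤ) = ((3:ℕ):ℤ) := by norm_num
  rw [this, zpow_natCast, pow_succ, pow_two, ← Matrix.mulVec_mulVec,
    ← Matrix.mulVec_mulVec, R4_mulVec, R4_mulVec, R4_mulVec]
  funext i; fin_cases i <;> simp

lemma rel_of_phi_eq (x y : {v : Fin 3 → ℝ // ∑ i, (v i) ^ 2 = 1})
    (h : phi (y : Fin 3 → ℝ) = phi (x : Fin 3 → ℝ)) : apxRel4 x y := by
  obtain ⟨x, hx⟩ := x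
  obtain ⟨y, hy⟩ := y
  simp only [Fin.sum_univ_three] at hx hy
  simp only [apxRel4]
  set a : ℂ := (x 0 : ℂ) + (x 1 : ℂ) * Complex.I with ha
  set b : ℂ := (y 0 : ℂ) + (y 1 : ℂ) * Complex.I with hb
  have h4 : b ^ 4 = a ^ 4 := h
  have hfac : (b - a) * (b + a) * (b - Complex.I * a) * (b + Complex.I * a) = 0 := by
    linear_combination h4 + (a^4 - a^2*b^2) * Complex.I_sq
  -- extract the four cases for (y 0, y 1)
  have hcases : (y 0 = x 0 ∧ y 1 = x 1) ∨ (y 0 = -(x 0) ∧ y 1 = -(x 1)) ∨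
      (y 0 = -(x 1) ∧ y 1 = x 0) ∨ (y 0 = x 1 ∧ y 1 = -(x 0)) := by
    rcases mul_eq_zero.mp hfac with h' | h'
    · rcases mul_eq_zero.mp h' with h'' | h''
      · rcases mul_eq_zero.mp h'' with h3 | h3
        · left
          have hba : b = a := sub_eq_zero.mp h3
          constructor
          · have := congrArg Complex.re hba; simpa [ha, hb] using this
          · have := congrArg Complex.im hba; simpa [ha, hb] using this
        · right; left
          have hba : b = -a := by linear_combination h3
          constructor
          · have := congrArg Complex.re hba; simpa [ha, hb] using this
          · have := congrArg Complex.im hba; simpa [ha, hb] using this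
      · right; right; left
        have hba : b = Complex.I * a := by linear_combination h''
        have hre := congrArg Complex.re hba
        have him := congrArg Complex.im hba
        simp [ha, hb] at hre him
        exact ⟨hre, him⟩
    · right; right; right
      have hba : b = -(Complex.I * a) := by linear_combination h'
      have hre := congrArg Complex.re hba
      have him := congrArg Complex.im hba
      simp [ha, hb] at hre him
      exact ⟨hre, him⟩
  -- the third coordinates agree up to sign
  have hzsq : y 2 ^ 2 = x 2 ^ 2 := by
    rcases hcases with ⟨h0, h1⟩ | ⟨h0, h1⟩ | ⟨h0, h1⟩ | ⟨h0, h1⟩ <;>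
      (rw [h0, h1] at hy; nlinarith)
  have hz : y 2 = x 2 ∨ y 2 = -(x 2) := by
    have : (y 2 - x 2) * (y 2 + x 2) = 0 := by nlinarith
    rcases mul_eq_zero.mp this with h' | h'
    · left; linarith
    · right; linarith
  rcases hcases with ⟨h0, h1⟩ | ⟨h0, h1⟩ | ⟨h0, h1⟩ | ⟨h0, h1⟩ <;> rcases hz with h2 | h2
  · exact ⟨0, 1, Or.inl rfl, by
      rw [R4_zpow0_mulVec, one_smul]; funext i; fin_cases i <;> simp [h0, h1, h2]⟩
  · exact ⟨2, -1, Or.inr rfl, by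
      rw [R4_zpow2_mulVec]; funext i; fin_cases i <;> simp [h0, h1, h2]⟩
  · exact ⟨2, 1, Or.inl rfl, by
      rw [R4_zpow2_mulVec, one_smul]; funext i; fin_cases i <;> simp [h0, h1, h2]⟩
  · exact ⟨0, -1, Or.inr rfl, by
      rw [R4_zpow0_mulVec]; funext i; fin_cases i <;> simp [h0, h1, h2]⟩
  · exact ⟨3, -1, Or.inr rfl, by
      rw [R4_zpow3_mulVec]; funext i; fin_cases i <;> simp [h0, h1, h2]⟩
  · exact ⟨1, 1, Or.inl rfl, by
      rw [R4_zpow1_mulVec, one_smul]; funext i; fin_cases i <;> simp [h0, h1, h2]⟩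
  · exact ⟨1, -1, Or.inr rfl, by
      rw [R4_zpow1_mulVec]; funext i; fin_cases i <;> simp [h0, h1, h2]⟩
  · exact ⟨3, 1, Or.inl rfl, by
      rw [R4_zpow3_mulVec, one_smul]; funext i; fin_cases i <;> simp [h0, h1, h2]⟩

lemma phi_mem_ball (v : Fin 3 → ℝ) (hv : ∑ i, (v i) ^ 2 = 1) :
    phi v ∈ Metric.closedBall (0 : ℂ) 1 := by
  simp only [Fin.sum_univ_three] at hv
  rw [Metric.mem_closedBall, dist_zero_right, phi, norm_pow]
  have habs : ‖(v 0 : ℂ) + (v 1 : ℂ) * Complex.I‖ ^ 2 = v 0 ^ 2 + v 1 ^ 2 := by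
    rw [Complex.sq_norm, Complex.normSq_apply]
    simp
    ring
  have h1 : ‖(v 0 : ℂ) + (v 1 : ℂ) * Complex.I‖ ≤ 1 := by
    nlinarith [norm_nonneg ((v 0 : ℂ) + (v 1 : ℂ) * Complex.I), sq_nonneg (v 2)]
  exact pow_le_one₀ (norm_nonneg _) h1

lemma phi_surj (z : ℂ) (hz : z ∈ Metric.closedBall (0 : ℂ) 1) :
    ∃ v : Fin 3 → ℝ, (∑ i, (v i) ^ 2 = 1) ∧ phi v = z := by
  obtain ⟨w, hw⟩ := IsAlgClosed.exists_pow_nat_eq z (n := 4) (by norm_num)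
  have hwle : ‖w‖ ≤ 1 := by
    rw [Metric.mem_closedBall, dist_zero_right] at hz
    have : ‖w‖ ^ 4 ≤ 1 := by rw [← norm_pow, hw]; exact hz
    exact (pow_le_one_iff_of_nonneg (norm_nonneg w) (by norm_num)).mp this
  refine ⟨![w.re, w.im, Real.sqrt (1 - ‖w‖ ^ 2)], ?_, ?_⟩
  · have h0 : 0 ≤ 1 - ‖w‖ ^ 2 := by nlinarith [norm_nonneg w]
    have hsq : Real.sqrt (1 - ‖w‖ ^ 2) ^ 2 = 1 - ‖w‖ ^ 2 :=
      Real.sq_sqrt h0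
    have habs : ‖w‖ ^ 2 = w.re ^ 2 + w.im ^ 2 := by
      rw [Complex.sq_norm, Complex.normSq_apply]; ring
    simp only [Fin.sum_univ_three]
    simp only [Matrix.cons_val_zero, Matrix.cons_val_one, Matrix.head_cons,
      Matrix.cons_val_two, Matrix.tail_cons]
    rw [hsq]
    linarith
  · simp only [phi]
    simp only [Matrix.cons_val_zero, Matrix.cons_val_one, Matrix.head_cons]
    rw [Complex.re_add_im, hw]

lemma phi_cont : Continuous fun v : Fin 3 → ℝ => phi v := by
  unfold phi
  fun_prop

instance sphereCompact : CompactSpace {v : Fin 3 → ℝ // ∑ i, (v i) ^ 2 = 1} := by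
  have hc : IsCompact {v : Fin 3 → ℝ | ∑ i, (v i) ^ 2 = 1} := by
    apply Metric.isCompact_of_isClosed_isBounded
    · exact isClosed_eq (by fun_prop) continuous_const
    · rw [isBounded_iff_forall_norm_le]
      refine ⟨1, fun v hv => ?_⟩
      rw [pi_norm_le_iff_of_nonneg (by norm_num)]
      intro i
      have hle : v i ^ 2 ≤ 1 := by
        have := Finset.single_le_sum (f := fun j => v j ^ 2)
          (fun j _ => sq_nonneg (v j)) (Finset.mem_univ i)
        rw [hv] at this
        exact this
      rw [Real.norm_eq_abs]
      nlinarith [abs_nonneg (v i), sq_abs (v i)]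
  exact isCompact_iff_compactSpace.mp hc

/-- The induced map to the closed disc. -/
def Fmap : {v : Fin 3 → ℝ // ∑ i, (v i) ^ 2 = 1} → ↥(Metric.closedBall (0 : ℂ) 1) :=
  fun x => ⟨phi (x : Fin 3 → ℝ), phi_mem_ball _ x.2⟩

lemma Fmap_resp (a b : {v : Fin 3 → ℝ // ∑ i, (v i) ^ 2 = 1}) (hab : apxRel4 a b) :
    Fmap a = Fmap b := by
  obtain ⟨l, ε, hε, heq⟩ := hab
  exact Subtype.ext (phi_invariant ⟨l, ε, hε, heq⟩).symm

/-- The quotient `S²/⟨ℛ₄, ν⟩` (the space `𝓛(4)` of shapes of `4`-segments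
without labelled vertices) is homeomorphic to the closed unit disc `𝔻² ⊆ ℂ`. -/
theorem L4_homeomorph_disc :
    Nonempty (Quot apxRel4 ≃ₜ ↥(Metric.closedBall (0 : ℂ) 1)) := by
  have hFc : Continuous Fmap :=
    Continuous.subtype_mk (phi_cont.comp continuous_subtype_val) _
  have hcont : Continuous (Quot.lift Fmap Fmap_resp) := continuous_quot_lift _ hFc
  have hinj : Function.Injective (Quot.lift Fmap Fmap_resp) := by
    intro p q
    induction p using Quot.ind with | _ a =>
    induction q using Quot.ind with | _ b =>
    intro h
    apply Quot.sound
    exact rel_of_phi_eq a b (congrArg Subtype.val h).symm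
  have hsurj : Function.Surjective (Quot.lift Fmap Fmap_resp) := by
    rintro ⟨z, hz⟩
    obtain ⟨v, hv, hphi⟩ := phi_surj z hz
    exact ⟨Quot.mk _ ⟨v, hv⟩, Subtype.ext hphi⟩
  exact ⟨Continuous.homeoOfEquivCompactToT2
    (f := Equiv.ofBijective _ ⟨hinj, hsurj⟩) hcont⟩
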